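/- arXiv:1302.1999 — 4 statements merged into one kernel-verified Lean document; each statement's English description precedes it below -/
import Mathlib

section
/- The bivariate generating function of any stationary distribution of the exponentially-delayed-arrivals queue satisfies (1−ρ)·P(z,z) = (1−ρ+ρz)·P(0,z) for all complex z with |z| ≤ 1. -/
open scoped BigOperators

noncomputable section

/-- `b j l = C(l,j) p^j q^(l-j)` with `p = 1 - q`, and `b j l = 0` for `j > l`. -/
def binomB (q : ℝ) (j l : ℕ) : ℝ :=
  if j ≤ l then (Nat.choose l j : ℝ) * (1 - q) ^ j * q ^ (l - j) else 0

/-- Transition kernel of the chain on `ℕ × ℕ`: from `(n, l)` move to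
`(max (n-1) 0 + j, l + 1 - j)` with probability `ρ * b j (l+1)` for `0 ≤ j ≤ l + 1`,
and to `(max (n-1) 0 + j, l - j)` with probability `(1 - ρ) * b j l` for `0 ≤ j ≤ l`.
(In `ℕ`, `n - 1` is truncated subtraction, i.e. `max (n-1) 0`.) -/
def kernel (ρ q : ℝ) (s s' : ℕ × ℕ) : ℝ :=
  ρ * ∑ j ∈ Finset.range (s.2 + 2),
        (if s' = (s.1 - 1 + j, s.2 + 1 - j) then binomB q j (s.2 + 1) else 0) +
    (1 - ρ) * ∑ j ∈ Finset.range (s.2 + 1),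
        (if s' = (s.1 - 1 + j, s.2 - j) then binomB q j s.2 else 0)

/-- Bivariate generating function `P(z,y) = Σ_{n,l} P_{n,l} z^n y^l`. -/
def gf (P : ℕ × ℕ → ℝ) (z y : ℂ) : ℂ :=
  ∑' s : ℕ × ℕ, (P s : ℂ) * z ^ s.1 * y ^ s.2

end

/-!
Write `G w = P(w, w)` and `H w = P(0, w)`. One step of the chain lowers `n + l` by one unless
`n = 0`, and then adds a Bernoulli(`ρ`) arrival, so multiplying stationarity by `w ^ (n + l)` and
summing gives `w G = (ρ w + 1 - ρ) (G + (w - 1) H)`, i.e.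
`(w - 1) ((1 - ρ) G - (1 - ρ + ρ w) H) = 0`.
This gives the claim for `w ≠ 1`; at `w = 1` it follows from continuity of both series on the
closed unit disc.
-/

open Finset Metric Set

theorem tsum_mul_eq_tsum_kernel_mul {α : Type*} {K : α → α → ℝ} {P : α → ℝ}
    (hK : ∀ s s', 0 ≤ K s s') (hrow : ∀ s, HasSum (K s) 1) (hP : ∀ s, 0 ≤ P s)
    (hPs : Summable P) (hstat : ∀ s', ∑' s, P s * K s s' = P s')
    {f : α → ℂ} {C : ℝ} (hf : ∀ s, ‖f s‖ ≤ C) :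
    ∑' s', (P s' : ℂ) * f s' = ∑' s, (P s : ℂ) * ∑' s', (K s s' : ℂ) * f s' := by
  have hPK : Summable fun x : α × α => P x.1 * K x.1 x.2 := by
    refine (summable_prod_of_nonneg fun x => mul_nonneg (hP _) (hK _ _)).2
      ⟨fun s => ((hrow s).mul_left (P s)).summable, hPs.congr fun s => ?_⟩
    rw [((hrow s).mul_left (P s)).tsum_eq, mul_one]
  have hsummable : Summable (Function.uncurry fun s s' => (P s : ℂ) * K s s' * f s') := by
    refine Summable.of_norm_bounded (hPK.mul_right C) fun x => ?_
    simp only [Function.uncurry, norm_mul, Complex.norm_real, Real.norm_of_nonneg (hP _),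
      Real.norm_of_nonneg (hK _ _)]
    exact mul_le_mul_of_nonneg_left (hf _) (mul_nonneg (hP _) (hK _ _))
  calc ∑' s', (P s' : ℂ) * f s'
      = ∑' s', ∑' s, (P s : ℂ) * K s s' * f s' := by
        refine tsum_congr fun s' => ?_
        rw [tsum_mul_right, ← hstat s', Complex.ofReal_tsum]
        push_cast
        rfl
    _ = ∑' s, ∑' s', (P s : ℂ) * K s s' * f s' := hsummable.tsum_comm
    _ = ∑' s, (P s : ℂ) * ∑' s', (K s s' : ℂ) * f s' := by
        simp only [mul_assoc, tsum_mul_left]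

lemma binomB_nonneg {q : ℝ} (hq : q ∈ Icc (0 : ℝ) 1) (j l : ℕ) : 0 ≤ binomB q j l := by
  unfold binomB
  split_ifs
  · exact mul_nonneg (mul_nonneg (Nat.cast_nonneg _) (pow_nonneg (by linarith [hq.2]) _))
      (pow_nonneg hq.1 _)
  · exact le_rfl

lemma kernel_nonneg {ρ q : ℝ} (hρ : ρ ∈ Icc (0 : ℝ) 1) (hq : q ∈ Icc (0 : ℝ) 1)
    (s s' : ℕ × ℕ) : 0 ≤ kernel ρ q s s' := by
  have : 0 ≤ 1 - ρ := by linarith [hρ.2]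
  unfold kernel
  refine add_nonneg (mul_nonneg hρ.1 (sum_nonneg fun j _ => ?_))
    (mul_nonneg this (sum_nonneg fun j _ => ?_)) <;>
  split_ifs <;> first | exact binomB_nonneg hq _ _ | exact le_rfl

lemma sum_binomB (q : ℝ) (l : ℕ) : ∑ j ∈ range (l + 1), binomB q j l = 1 := by
  have h : ∀ j ∈ range (l + 1), binomB q j l = (1 - q) ^ j * q ^ (l - j) * l.choose j := by
    intro j hj
    rw [binomB, if_pos (Nat.lt_succ_iff.1 (mem_range.1 hj))]
    ring
  rw [sum_congr rfl h, ← add_pow]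
  norm_num

lemma sum_binomB_mul_pow (q : ℝ) (m l : ℕ) (z : ℂ) :
    ∑ j ∈ range (l + 1), (binomB q j l : ℂ) * z ^ ((m + j) + (l - j)) = z ^ (m + l) := by
  have h : ∀ j ∈ range (l + 1), (binomB q j l : ℂ) * z ^ ((m + j) + (l - j))
      = (binomB q j l : ℂ) * z ^ (m + l) := by
    intro j hj
    have hjl := mem_range.1 hj
    rw [show m + j + (l - j) = m + l by omega]
  rw [sum_congr rfl h, ← sum_mul, ← Complex.ofReal_sum, sum_binomB, Complex.ofReal_one, one_mul]

lemma hasSum_kernel_mul (ρ q : ℝ) (s : ℕ × ℕ) (f : ℕ × ℕ → ℂ) :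
    HasSum (fun s' => (kernel ρ q s s' : ℂ) * f s')
      ((ρ : ℂ) * ∑ j ∈ range (s.2 + 2), (binomB q j (s.2 + 1) : ℂ) * f (s.1 - 1 + j, s.2 + 1 - j) +
      (1 - ρ : ℂ) * ∑ j ∈ range (s.2 + 1), (binomB q j s.2 : ℂ) * f (s.1 - 1 + j, s.2 - j)) := by
  have hpoint : ∀ (m : ℕ) (g : ℕ → ℕ × ℕ) (c : ℕ → ℝ),
      HasSum (fun s' => ∑ j ∈ range m, (if s' = g j then (c j : ℂ) else 0) * f s')
        (∑ j ∈ range m, (c j : ℂ) * f (g j)) := by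
    refine fun m g c => hasSum_sum fun j _ => ?_
    convert hasSum_ite_eq (g j) ((c j : ℂ) * f (g j)) using 2 with s'
    split_ifs with h <;> simp [h]
  refine (funext fun s' => ?_ : (fun s' => (kernel ρ q s s' : ℂ) * f s') = _) ▸
    ((hpoint _ _ _).mul_left (ρ : ℂ)).add ((hpoint _ _ _).mul_left (1 - (ρ : ℂ)))
  simp only [kernel, Complex.ofReal_add, Complex.ofReal_mul, Complex.ofReal_sub,
    Complex.ofReal_one, Complex.ofReal_sum, apply_ite (fun r : ℝ => (r : ℂ)), Complex.ofReal_zero,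
    add_mul, mul_assoc, sum_mul]

lemma hasSum_kernel_mul_pow (ρ q : ℝ) (z : ℂ) (s : ℕ × ℕ) :
    HasSum (fun s' => (kernel ρ q s s' : ℂ) * z ^ (s'.1 + s'.2))
      ((ρ * z + (1 - ρ)) * z ^ (s.1 - 1 + s.2)) := by
  convert hasSum_kernel_mul ρ q s (fun s' => z ^ (s'.1 + s'.2)) using 1
  simp only [sum_binomB_mul_pow]
  ring

lemma hasSum_kernel (ρ q : ℝ) (s : ℕ × ℕ) : HasSum (kernel ρ q s) 1 := by
  rw [← Complex.hasSum_ofReal]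
  simpa using hasSum_kernel_mul_pow ρ q 1 s

lemma pow_sub_one_add_mul_self {R : Type*} [CommRing R] (w : R) (n l : ℕ) :
    w ^ (n - 1 + l) * w = w ^ (n + l) + (w - 1) * if n = 0 then w ^ l else 0 := by
  rcases n with _ | n
  · simp only [zero_tsub, zero_add, if_true]
    ring
  · simp only [add_tsub_cancel_right, add_right_comm n 1 l, pow_succ, if_neg n.succ_ne_zero]
    ring

lemma gf_diag (P : ℕ × ℕ → ℝ) (w : ℂ) : gf P w w = ∑' s, (P s : ℂ) * w ^ (s.1 + s.2) := by
  simp only [gf, pow_add, mul_assoc]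

lemma gf_zero_left (P : ℕ × ℕ → ℝ) (w : ℂ) :
    gf P 0 w = ∑' s, (P s : ℂ) * if s.1 = 0 then w ^ s.2 else 0 := by
  refine tsum_congr fun s => ?_
  rw [zero_pow_eq]
  split_ifs <;> ring

lemma summable_ofReal_mul {α : Type*} {P : α → ℝ} (hP : Summable P) {f : α → ℂ} {C : ℝ}
    (hf : ∀ s, ‖f s‖ ≤ C) : Summable fun s => (P s : ℂ) * f s := by
  refine Summable.of_norm_bounded (hP.abs.mul_right C) fun s => ?_
  rw [norm_mul, Complex.norm_real, Real.norm_eq_abs]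
  exact mul_le_mul_of_nonneg_left (hf s) (abs_nonneg _)

lemma continuousOn_gf {P : ℕ × ℕ → ℝ} (hP : Summable P) :
    ContinuousOn (fun x : ℂ × ℂ => gf P x.1 x.2) (closedBall 0 1 ×ˢ closedBall 0 1) := by
  refine continuousOn_tsum (u := fun s => |P s|) (fun s => by fun_prop) hP.abs ?_
  rintro s ⟨z, y⟩ ⟨hz, hy⟩
  rw [mem_closedBall_zero_iff] at hz hy
  rw [norm_mul, norm_mul, Complex.norm_real, Real.norm_eq_abs, norm_pow, norm_pow, mul_assoc]
  exact mul_le_of_le_one_right (abs_nonneg _)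
    (mul_le_one₀ (pow_le_one₀ (norm_nonneg _) hz) (by positivity) (pow_le_one₀ (norm_nonneg _) hy))

theorem gf_functional_eq_mul_sub_one {ρ q : ℝ} (hρ : ρ ∈ Icc (0 : ℝ) 1) (hq : q ∈ Icc (0 : ℝ) 1)
    {P : ℕ × ℕ → ℝ} (hpos : ∀ s, 0 ≤ P s) (hP : Summable P)
    (hstat : ∀ s', ∑' s, P s * kernel ρ q s s' = P s') {w : ℂ} (hw : ‖w‖ ≤ 1) :
    (w - 1) * ((1 - ρ) * gf P w w - (1 - ρ + ρ * w) * gf P 0 w) = 0 := by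
  have hpow : ∀ n : ℕ, ‖w ^ n‖ ≤ 1 := fun n => by
    rw [norm_pow]
    exact pow_le_one₀ (norm_nonneg _) hw
  have hite : ∀ s : ℕ × ℕ, ‖if s.1 = 0 then w ^ s.2 else 0‖ ≤ 1 := fun s => by
    split_ifs
    exacts [hpow _, by simp]
  set c : ℂ := ρ * w + (1 - ρ)
  have hstep : gf P w w = ∑' s, (P s : ℂ) * (c * w ^ (s.1 - 1 + s.2)) := by
    rw [gf_diag, tsum_mul_eq_tsum_kernel_mul (kernel_nonneg hρ hq) (hasSum_kernel ρ q) hpos hP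
      hstat (fun s => hpow (s.1 + s.2))]
    exact tsum_congr fun s => by rw [(hasSum_kernel_mul_pow ρ q w s).tsum_eq]
  have hmul : w * gf P w w = c * gf P w w + c * (w - 1) * gf P 0 w := by
    calc w * gf P w w
        = ∑' s, (c * ((P s : ℂ) * w ^ (s.1 + s.2))
            + c * (w - 1) * ((P s : ℂ) * if s.1 = 0 then w ^ s.2 else 0)) := by
          rw [hstep, ← tsum_mul_left]
          refine tsum_congr fun s => ?_
          linear_combination (P s : ℂ) * c * pow_sub_one_add_mul_self w s.1 s.2
      _ = c * gf P w w + c * (w - 1) * gf P 0 w := by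
          rw [((summable_ofReal_mul hP fun s => hpow (s.1 + s.2)).mul_left c).tsum_add
            ((summable_ofReal_mul hP hite).mul_left _), tsum_mul_left, tsum_mul_left, ← gf_diag,
            gf_zero_left]
  linear_combination hmul

theorem stmt1 (ρ q : ℝ) (hρ : ρ ∈ Set.Ioo (0 : ℝ) 1) (hq : q ∈ Set.Ioo (0 : ℝ) 1)
    (P : ℕ × ℕ → ℝ) (hpos : ∀ s, 0 ≤ P s) (hsum : HasSum P 1)
    (hstat : ∀ s' : ℕ × ℕ, ∑' s : ℕ × ℕ, P s * kernel ρ q s s' = P s')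
    (z : ℂ) (hz : ‖z‖ ≤ 1) :
    (1 - (ρ : ℂ)) * gf P z z = (1 - (ρ : ℂ) + (ρ : ℂ) * z) * gf P 0 z := by
  set Φ : ℂ → ℂ := fun w => (1 - ρ) * gf P w w - (1 - ρ + ρ * w) * gf P 0 w
  have hdiag : ContinuousOn (fun w => gf P w w) (closedBall 0 1) :=
    (continuousOn_gf hsum.summable).comp (f := fun w => (w, w)) (by fun_prop) fun w hw => ⟨hw, hw⟩
  have hleft : ContinuousOn (fun w => gf P 0 w) (closedBall 0 1) :=
    (continuousOn_gf hsum.summable).comp (f := fun w => (0, w)) (by fun_prop)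
      fun w hw => ⟨mem_closedBall_self zero_le_one, hw⟩
  have hcont : ContinuousOn Φ (closedBall 0 1) := by fun_prop
  have hball : EqOn Φ 0 (ball 0 1) := fun w hw => by
    have hw : ‖w‖ < 1 := mem_ball_zero_iff.1 hw
    have hw1 : w - 1 ≠ 0 := sub_ne_zero.2 fun h => by simp [h] at hw
    exact (mul_eq_zero.1 (gf_functional_eq_mul_sub_one (Ioo_subset_Icc_self hρ)
      (Ioo_subset_Icc_self hq) hpos hsum.summable hstat hw.le)).resolve_left hw1
  exact sub_eq_zero.1 <| hball.of_subset_closure hcont continuousOn_const ball_subset_closedBall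
    (closure_ball 0 one_ne_zero).ge (mem_closedBall_zero_iff.2 hz)
end

section
/- Under the assumptions on F, for every k ≥ 0 the identity (1−ρ)·a_0^k(z) = P^(k)(0,z) holds as polynomials in z; equivalently, P^(k)(0,z) + (P^(k)(z,z) − P^(k)(0,z))/z = P^(k)(0,z)/(1−ρ). -/
open scoped BigOperators

noncomputable section

/-- Polynomials in `z` (outer variable) with coefficients polynomials in `y` (inner variable);
this is the ring in which the coefficients `P^(k)(z,y)` live. -/
abbrev Bzy : Type := Polynomial (Polynomial ℂ)

/-- The variable `y` as an element of `Bzy` (the outer variable `Polynomial.X` is `z`). -/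
def yB : Bzy := Polynomial.C Polynomial.X

/-- A complex constant as an element of `Bzy`. -/
def cB (c : ℂ) : Bzy := Polynomial.C (Polynomial.C c)

/-- The power series `u = z + q (y - z)` in the variable `q`, with coefficients in `Bzy`. -/
def useries : PowerSeries Bzy :=
  PowerSeries.C (R := Bzy) Polynomial.X + PowerSeries.X * PowerSeries.C (R := Bzy) (yB - Polynomial.X)

/-- The inclusion of complex constants into `Bzy[[q]]`. -/
def constHom : ℂ →+* PowerSeries Bzy :=
  (PowerSeries.C (R := Bzy)).comp
    ((Polynomial.C : Polynomial ℂ →+* Bzy).comp (Polynomial.C : ℂ →+* Polynomial ℂ))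

/-- Substitution of `u = z + q(y-z)` for the variable in a polynomial in `y`. -/
def substY : Polynomial ℂ →+* PowerSeries Bzy :=
  Polynomial.eval₂RingHom constHom useries

/-- Substitution `z ↦ z`, `y ↦ u = z + q(y-z)` in a polynomial in `z` and `y`. -/
def substZY : Bzy →+* PowerSeries Bzy :=
  Polynomial.eval₂RingHom substY (PowerSeries.C (R := Bzy) Polynomial.X)

/-- The formal functional equation `z·F(z,y) = (1-ρ+ρu)·[(z-1)·F(0,u) + F(z,u)]`, where
`F = Σ_k q^k P^(k)(z,y)`, `F(0,u)` is obtained by setting `z = 0` (i.e. taking the coefficient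
of `z^0`) and substituting `u` for `y`, and `F(z,u)` by substituting `u` for `y`; the `m`-th
coefficient of `F(z,u)` is `Σ_{k ≤ m} [q^(m-k)] (P^(k)(z, z + q(y-z)))`, and similarly
for `F(0,u)`. -/
def FuncEq (ρ : ℝ) (P : ℕ → Bzy) : Prop :=
  PowerSeries.C (R := Bzy) Polynomial.X * PowerSeries.mk (fun k => P k) =
    (constHom (1 - (ρ : ℂ)) + constHom (ρ : ℂ) * useries) *
      (PowerSeries.C (R := Bzy) (Polynomial.X - 1) *
          PowerSeries.mk (fun m => ∑ k ∈ Finset.range (m + 1),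
            PowerSeries.coeff (R := Bzy) (m - k) (substY ((P k).coeff 0))) +
        PowerSeries.mk (fun m => ∑ k ∈ Finset.range (m + 1),
          PowerSeries.coeff (R := Bzy) (m - k) (substZY (P k))))

/-- `P^(0)(z,y)` does not depend on `y`. -/
def IndepY (P : ℕ → Bzy) : Prop := ∀ n : ℕ, ∃ c : ℂ, (P 0).coeff n = Polynomial.C c

/-- Boundary conditions: `P^(0)(0,1) = 1 - ρ` and `P^(k)(0,1) = 0` for all `k ≥ 1`. -/
def Boundary (ρ : ℝ) (P : ℕ → Bzy) : Prop :=
  ((P 0).coeff 0).eval 1 = 1 - (ρ : ℂ) ∧ ∀ k : ℕ, 1 ≤ k → ((P k).coeff 0).eval 1 = 0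

/-- Derivative with respect to the inner variable `y`. -/
def dy (p : Bzy) : Bzy :=
  p.sum fun n a => Polynomial.C (Polynomial.derivative a) * Polynomial.X ^ n

/-- The polynomial `P^(k)(0,y) + (P^(k)(z,y) - P^(k)(0,y))/z`, where the quotient is exact
polynomial division by the monic polynomial `z`. -/
def bracket (P : ℕ → Bzy) (k : ℕ) : Bzy :=
  Polynomial.C ((P k).coeff 0) + (P k - Polynomial.C ((P k).coeff 0)) /ₘ Polynomial.X

/-- `a_j^k(z) = ∂_y^j [P^(k)(0,y) + (P^(k)(z,y) - P^(k)(0,y))/z] |_{y=z}`, a polynomial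
in the single variable `z`. -/
def aCoef (P : ℕ → Bzy) (j k : ℕ) : Polynomial ℂ :=
  Polynomial.eval₂ (RingHom.id (Polynomial ℂ)) Polynomial.X ((dy^[j]) (bracket P k))

/-- Reinterpret a polynomial in the single variable `z` as an element of `Bzy`. -/
def embZ : Polynomial ℂ →+* Bzy := Polynomial.mapRingHom (Polynomial.C : ℂ →+* Polynomial ℂ)

/-- `A_j^k(z) = jρ a_{j-1}^{k-j}(z) + (1+ρ(z-1)) a_j^{k-j}(z)` for `1 ≤ j ≤ k`,
`A_0^0(z) = 1 + ρ(z-1)`, and `A_j^k(z) = 0` otherwise. -/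
def Acoef (ρ : ℝ) (P : ℕ → Bzy) (j k : ℕ) : Polynomial ℂ :=
  if 1 ≤ j ∧ j ≤ k then
    (j : Polynomial ℂ) * Polynomial.C (ρ : ℂ) * aCoef P (j - 1) (k - j) +
      (1 + Polynomial.C (ρ : ℂ) * (Polynomial.X - 1)) * aCoef P j (k - j)
  else if j = 0 ∧ k = 0 then 1 + Polynomial.C (ρ : ℂ) * (Polynomial.X - 1)
  else 0

end

/-!
Specialise `y = z`. Then `u = z + q(y - z)` becomes the constant series `z`, so the functional
equation splits coefficientwise into `z S = c((z - 1) p + S)` with `S = P^(k)(z,z)`,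
`p = P^(k)(0,z)` and `c = 1 - ρ + ρz`, while the bracket `B = a_0^k` satisfies
`z B = (z - 1) p + S`. Hence `S = c B`, and substituting back gives
`(z - c) B = (z - 1) p`, where `z - c = (1 - ρ)(z - 1)`.
-/

open Polynomial

theorem Polynomial.X_mul_sub_C_coeff_zero_divByMonic_X {R : Type*} [CommRing R] (p : R[X]) :
    X * ((p - C (p.coeff 0)) /ₘ X) = p - C (p.coeff 0) := by
  have h := (mul_divByMonic_eq_iff_isRoot (p := p - C (p.coeff 0)) (a := 0)).2
    (by simp [IsRoot, coeff_zero_eq_eval_zero])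
  rwa [map_zero, sub_zero] at h

theorem PowerSeries.map_mk_sum_coeff_sub {R S : Type*} [CommRing R] [CommRing S] (φ : R →+* S)
    (f : ℕ → PowerSeries R) (g : ℕ → S)
    (hf : ∀ k, PowerSeries.map φ (f k) = PowerSeries.C (g k)) :
    PowerSeries.map φ
        (PowerSeries.mk fun m => ∑ k ∈ Finset.range (m + 1), PowerSeries.coeff (m - k) (f k)) =
      PowerSeries.mk g := by
  ext n
  rw [PowerSeries.coeff_map, PowerSeries.coeff_mk, PowerSeries.coeff_mk, map_sum]
  simp only [← PowerSeries.coeff_map, hf, PowerSeries.coeff_C]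
  rw [Finset.sum_eq_single_of_mem n (Finset.self_mem_range_succ n) fun k hk hkn => ?_]
  · simp
  · rw [Finset.mem_range] at hk
    exact if_neg (by omega)

/-- The specialisation `y = z`, sending `Q(z,y)` to `Q(z,z)`. -/
noncomputable def diag : Bzy →+* ℂ[X] := eval₂RingHom (RingHom.id ℂ[X]) X

@[simp] theorem diag_C (a : ℂ[X]) : diag (C a) = a := eval₂_C _ _

@[simp] theorem diag_X : diag X = X := eval₂_X _ _

theorem map_diag_useries : PowerSeries.map diag useries = PowerSeries.C X := by
  simp [useries, yB]

theorem map_diag_constHom (c : ℂ) :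
    PowerSeries.map diag (constHom c) = PowerSeries.C (C c) := by
  simp [constHom]

theorem map_diag_substY (p : ℂ[X]) : PowerSeries.map diag (substY p) = PowerSeries.C p := by
  rw [substY, coe_eval₂RingHom, hom_eval₂, map_diag_useries]
  have hconst : (PowerSeries.map diag).comp constHom = (PowerSeries.C (R := ℂ[X])).comp C :=
    RingHom.ext map_diag_constHom
  rw [hconst, ← hom_eval₂, eval₂_C_X]

theorem map_diag_substZY (Q : Bzy) :
    PowerSeries.map diag (substZY Q) = PowerSeries.C (diag Q) := by
  rw [substZY, coe_eval₂RingHom, hom_eval₂, PowerSeries.map_C, diag_X]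
  have hsubst : (PowerSeries.map diag).comp substY = PowerSeries.C (R := ℂ[X]) :=
    RingHom.ext map_diag_substY
  rw [hsubst]
  exact (hom_eval₂ Q (RingHom.id ℂ[X]) PowerSeries.C X).symm

theorem map_diag_funcEq_factor (ρ : ℝ) :
    PowerSeries.map diag (constHom (1 - (ρ : ℂ)) + constHom (ρ : ℂ) * useries) =
      PowerSeries.C (1 - C (ρ : ℂ) + C (ρ : ℂ) * X) := by
  simp [map_diag_constHom, map_diag_useries]

theorem FuncEq.diag_coeff {ρ : ℝ} {P : ℕ → Bzy} (hF : FuncEq ρ P) (k : ℕ) :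
    X * diag (P k) =
      (1 - C (ρ : ℂ) + C (ρ : ℂ) * X) * ((X - 1) * (P k).coeff 0 + diag (P k)) := by
  have h := congrArg (PowerSeries.map diag) hF
  -- the ring homs are named so as not to split the constant series `PowerSeries.C (a + b)`
  rw [map_mul, map_mul, map_diag_funcEq_factor, map_add (PowerSeries.map diag),
    map_mul (PowerSeries.map diag), PowerSeries.map_C, PowerSeries.map_C, map_sub diag,
    map_one diag, diag_X,
    PowerSeries.map_mk_sum_coeff_sub diag _ _ (fun k => map_diag_substY ((P k).coeff 0)),
    PowerSeries.map_mk_sum_coeff_sub diag _ _ (fun k => map_diag_substZY (P k))] at h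
  have hk := congrArg (PowerSeries.coeff k) h
  rwa [PowerSeries.coeff_C_mul, PowerSeries.coeff_C_mul, map_add (PowerSeries.coeff k),
    PowerSeries.coeff_C_mul, PowerSeries.coeff_mk, PowerSeries.coeff_mk, PowerSeries.coeff_map,
    PowerSeries.coeff_mk] at hk

theorem X_mul_diag_bracket (P : ℕ → Bzy) (k : ℕ) :
    X * diag (bracket P k) = (X - 1) * (P k).coeff 0 + diag (P k) := by
  have hdiv := congrArg diag (X_mul_sub_C_coeff_zero_divByMonic_X (P k))
  rw [map_mul, map_sub, diag_X, diag_C] at hdiv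
  rw [bracket, map_add, diag_C, mul_add, hdiv]
  ring

theorem aCoef_zero (P : ℕ → Bzy) (k : ℕ) : aCoef P 0 k = diag (bracket P k) := rfl

theorem stmt6_general (ρ : ℝ) (P : ℕ → Bzy)
    (hF : FuncEq ρ P) :
    ∀ k : ℕ, Polynomial.C (1 - (ρ : ℂ)) * aCoef P 0 k = (P k).coeff 0 := by
  intro k
  have hEq := hF.diag_coeff k
  have hB := X_mul_diag_bracket P k
  have hS : diag (P k) = (1 - C (ρ : ℂ) + C (ρ : ℂ) * X) * diag (bracket P k) :=
    mul_left_cancel₀ X_ne_zero (by rw [hEq, ← hB]; ring)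
  have hX1 : (X - 1 : ℂ[X]) ≠ 0 := X_sub_C_ne_zero 1
  refine mul_left_cancel₀ hX1 ?_
  rw [aCoef_zero, map_sub, map_one]
  linear_combination hB + hS

theorem stmt6 (ρ : ℝ) (hρ : ρ ∈ Set.Ioo (0 : ℝ) 1) (P : ℕ → Bzy)
    (hF : FuncEq ρ P) (hI : IndepY P) (hB : Boundary ρ P) :
    ∀ k : ℕ, Polynomial.C (1 - (ρ : ℂ)) * aCoef P 0 k = (P k).coeff 0 :=
  stmt6_general ρ P hF
end

section
/- Under the assumptions on F, for every k ≥ 1 the boundary coefficient satisfies P^(k)(0,z) = Σ_{j=1}^{k} ((z^j − 1)/j!)·A_j^k(0), as an identity of polynomials in z. -/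
open scoped BigOperators

/-!
Write `P^(k) = P^(k)(0,y) + z·Q_k`. Then `(z-1)·P^(k)(0,u) + P^(k)(z,u) = z·B_k(z,u)` with
`B_k = bracket P k`, so after cancelling `z` the functional equation reads
`F = (1-ρ+ρu)·Σ_k q^k B_k(z,u)`. At `z = 0` we have `u = q·y`, so comparing coefficients of `q^k`
gives `P^(k)(0,y)` as a polynomial in `y` whose coefficient of `y^j` (`j ≥ 1`) is `A_j^k(0)/j!`,
because `a_j^k(0) = j!·[y^j] B_k(0,y)`. The boundary condition `P^(k)(0,1) = 0` then determines
the constant term.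
-/

open Polynomial

noncomputable def evalZ0 : PowerSeries Bzy →+* PowerSeries ℂ[X] := PowerSeries.map (evalRingHom 0)

/-- At `z = 0` we have `u = q·y`, so `p(z,u)` becomes `p(0, q·y)`. -/
lemma evalZ0_substZY (p : Bzy) :
    evalZ0 (substZY p) = PowerSeries.rescale X (PowerSeries.map C (p.coeff 0 : PowerSeries ℂ)) := by
  suffices h : evalZ0.comp substZY = (PowerSeries.rescale X).comp
      ((PowerSeries.map C).comp (coeToPowerSeries.ringHom.comp (evalRingHom 0))) by
    simpa [coeff_zero_eq_eval_zero] using RingHom.congr_fun h p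
  have hY : evalZ0.comp substY =
      (PowerSeries.rescale X).comp ((PowerSeries.map C).comp coeToPowerSeries.ringHom) := by
    refine ringHom_ext (fun c => ?_) ?_
    · ext (_ | n) <;> simp [substY, evalZ0, constHom, PowerSeries.coeff_rescale, PowerSeries.coeff_C]
    · simp [substY, evalZ0, useries, yB, PowerSeries.rescale_X, mul_comm]
  refine ringHom_ext (fun a => ?_) ?_
  · simpa [substZY] using RingHom.congr_fun hY a
  · simp [substZY, evalZ0]

lemma coeff_dy (n : ℕ) (p : Bzy) : (dy p).coeff n = derivative (p.coeff n) := by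
  simp only [dy, Polynomial.sum_def, finsetSum_coeff, coeff_C_mul_X_pow]
  rw [Finset.sum_ite_eq]
  split_ifs with h
  · rfl
  · rw [notMem_support_iff.mp h, derivative_zero]

lemma coeff_iterate_dy (j n : ℕ) (p : Bzy) :
    ((dy^[j]) p).coeff n = derivative^[j] (p.coeff n) := by
  induction j generalizing p with
  | zero => rfl
  | succ j ih => rw [Function.iterate_succ_apply', Function.iterate_succ_apply', coeff_dy, ih]

lemma sub_C_coeff_zero_divByMonic_X {R : Type*} [Ring R] (p : R[X]) :
    (p - C (p.coeff 0)) /ₘ X = divX p := by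
  nth_rewrite 1 [← X_mul_divX_add p]
  rw [add_sub_cancel_right, mul_divByMonic_cancel_left _ monic_X]

lemma C_X_sub_one_mul_substY_add_substZY (P : ℕ → Bzy) (k : ℕ) :
    PowerSeries.C (X - 1) * substY ((P k).coeff 0) + substZY (P k) =
      PowerSeries.C X * substZY (bracket P k) := by
  have hC : ∀ a, substZY (C a) = substY a := fun a => eval₂_C _ _
  rw [bracket, sub_C_coeff_zero_divByMonic_X]
  nth_rewrite 2 [← X_mul_divX_add (P k)]
  simp only [map_add, map_mul, hC, map_sub, map_one]
  rw [show substZY X = PowerSeries.C X from eval₂_X _ _]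
  ring

/-- `F(z,u)` for `F = Σ_k q^k f_k`, as in `FuncEq`. -/
noncomputable def substSeries (f : ℕ → Bzy) : PowerSeries Bzy :=
  PowerSeries.mk fun m => ∑ k ∈ Finset.range (m + 1), PowerSeries.coeff (m - k) (substZY (f k))

lemma FuncEq.mk_eq_mul_substSeries_bracket {ρ : ℝ} {P : ℕ → Bzy} (hF : FuncEq ρ P) :
    PowerSeries.mk P =
      (constHom (1 - ρ) + constHom ρ * useries) * substSeries (bracket P) := by
  have hsplit : PowerSeries.C (X - 1) *
          PowerSeries.mk (fun m => ∑ k ∈ Finset.range (m + 1),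
            PowerSeries.coeff (m - k) (substY ((P k).coeff 0))) +
        PowerSeries.mk (fun m => ∑ k ∈ Finset.range (m + 1),
          PowerSeries.coeff (m - k) (substZY (P k))) =
      PowerSeries.C X * substSeries (bracket P) := by
    refine PowerSeries.ext fun n => ?_
    simp only [substSeries, map_add, PowerSeries.coeff_C_mul, PowerSeries.coeff_mk,
      Finset.mul_sum, ← Finset.sum_add_distrib]
    refine Finset.sum_congr rfl fun k _ => ?_
    rw [← PowerSeries.coeff_C_mul, ← PowerSeries.coeff_C_mul, ← map_add,
      C_X_sub_one_mul_substY_add_substZY]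
  have hX : (PowerSeries.C X : PowerSeries Bzy) ≠ 0 :=
    (map_ne_zero_iff _ (PowerSeries.C_injective)).mpr X_ne_zero
  rw [FuncEq, hsplit, mul_left_comm] at hF
  exact mul_left_cancel₀ hX hF

lemma coeff_evalZ0_substSeries (f : ℕ → Bzy) (m : ℕ) :
    PowerSeries.coeff m (evalZ0 (substSeries f)) =
      ∑ j ∈ Finset.range (m + 1), C (((f (m - j)).coeff 0).coeff j) * X ^ j := by
  have hterm : ∀ n k, evalRingHom 0 (PowerSeries.coeff n (substZY (f k))) =
      C (((f k).coeff 0).coeff n) * X ^ n := fun n k => by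
    rw [← PowerSeries.coeff_map, ← evalZ0, evalZ0_substZY, PowerSeries.coeff_rescale,
      PowerSeries.coeff_map, coeff_coe, mul_comm]
  simp only [evalZ0, PowerSeries.coeff_map, substSeries, PowerSeries.coeff_mk, map_sum, hterm]
  rw [← Finset.sum_range_reflect]
  refine Finset.sum_congr rfl fun j hj => ?_
  rw [Nat.add_sub_cancel, Nat.sub_sub_self (Finset.mem_range_succ_iff.mp hj)]

lemma FuncEq.coeff_zero_succ {ρ : ℝ} {P : ℕ → Bzy} (hF : FuncEq ρ P) (m : ℕ) :
    (P (m + 1)).coeff 0 = C ((1 - ρ) * ((bracket P (m + 1)).coeff 0).coeff 0) +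
      ∑ i ∈ Finset.range (m + 1),
        C (ρ * ((bracket P (m - i)).coeff 0).coeff i +
          (1 - ρ) * ((bracket P (m - i)).coeff 0).coeff (i + 1)) * X ^ (i + 1) := by
  have hfactor : evalZ0 (constHom (1 - ρ) + constHom ρ * useries) =
      PowerSeries.C (C (1 - (ρ : ℂ))) + PowerSeries.X * PowerSeries.C (C (ρ : ℂ) * X) := by
    simp [evalZ0, constHom, useries, yB]
    ring
  have hlhs : (P (m + 1)).coeff 0 = PowerSeries.coeff (m + 1) (evalZ0 (PowerSeries.mk P)) := by
    simp [evalZ0, coeff_zero_eq_eval_zero]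
  rw [hlhs, hF.mk_eq_mul_substSeries_bracket, map_mul, hfactor]
  simp only [add_mul, map_add, mul_assoc, PowerSeries.coeff_C_mul,
    PowerSeries.coeff_succ_X_mul, coeff_evalZ0_substSeries]
  rw [Finset.sum_range_succ' _ (m + 1)]
  simp only [Nat.add_sub_add_right, Nat.sub_zero, pow_zero, mul_one, map_mul,
    mul_add, Finset.sum_add_distrib, Finset.mul_sum, mul_assoc, mul_left_comm X, ← pow_succ']
  ring

lemma aCoef_eval_zero (P : ℕ → Bzy) (j k : ℕ) :
    (aCoef P j k).eval 0 = j.factorial * ((bracket P k).coeff 0).coeff j := by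
  rw [aCoef, ← coe_evalRingHom, hom_eval₂, RingHom.comp_id, coe_evalRingHom, eval_X,
    eval₂_at_zero, coeff_iterate_dy]
  simp [← coeff_zero_eq_eval_zero, coeff_iterate_derivative, Nat.descFactorial_self]

lemma Acoef_succ_eval_zero (ρ : ℝ) (P : ℕ → Bzy) {i m : ℕ} (h : i ≤ m) :
    ((i + 1).factorial : ℂ)⁻¹ * (Acoef ρ P (i + 1) (m + 1)).eval 0 =
      ρ * ((bracket P (m - i)).coeff 0).coeff i +
        (1 - ρ) * ((bracket P (m - i)).coeff 0).coeff (i + 1) := by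
  rw [Acoef, if_pos ⟨by omega, by omega⟩, Nat.add_sub_cancel, Nat.add_sub_add_right]
  simp only [eval_add, eval_mul, eval_natCast, eval_C, eval_one, eval_sub, eval_X, aCoef_eval_zero]
  have hi : (i.factorial : ℂ) ≠ 0 := Nat.cast_ne_zero.mpr i.factorial_ne_zero
  rw [Nat.factorial_succ]
  push_cast
  field_simp
  ring

lemma eq_sum_C_mul_X_pow_sub_one {R : Type*} [CommRing R] {p : R[X]} {c : R} {t : ℕ → R} {n : ℕ}
    (hp : p = C c + ∑ i ∈ Finset.range n, C (t i) * X ^ (i + 1)) (h1 : p.eval 1 = 0) :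
    p = ∑ i ∈ Finset.range n, C (t i) * (X ^ (i + 1) - 1) := by
  have hc : c = -∑ i ∈ Finset.range n, t i := by
    simpa [hp, eval_finsetSum, eq_neg_iff_add_eq_zero] using h1
  rw [hp, hc]
  simp only [map_neg, map_sum, mul_sub, mul_one, Finset.sum_sub_distrib]
  ring

theorem stmt9_general (ρ : ℝ) (P : ℕ → Bzy)
    (hF : FuncEq ρ P) (hB : Boundary ρ P) :
    ∀ k : ℕ, 1 ≤ k →
      (P k).coeff 0 = ∑ j ∈ Finset.Icc 1 k,
        Polynomial.C ((j.factorial : ℂ)⁻¹ * (Acoef ρ P j k).eval 0) * (Polynomial.X ^ j - 1) := by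
  intro k hk
  obtain ⟨m, rfl⟩ := Nat.exists_eq_add_of_le' hk
  rw [eq_sum_C_mul_X_pow_sub_one (hF.coeff_zero_succ m) (hB.2 _ hk), Finset.range_eq_Ico,
    ← Finset.Ico_add_one_right_eq_Icc, ← Finset.sum_Ico_add' _ 0 (m + 1) 1]
  refine Finset.sum_congr rfl fun i hi => ?_
  rw [Acoef_succ_eval_zero ρ P (by simpa [Nat.lt_succ_iff] using hi)]

theorem stmt9 (ρ : ℝ) (hρ : ρ ∈ Set.Ioo (0 : ℝ) 1) (P : ℕ → Bzy)
    (hF : FuncEq ρ P) (hI : IndepY P) (hB : Boundary ρ P) :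
    ∀ k : ℕ, 1 ≤ k →
      (P k).coeff 0 = ∑ j ∈ Finset.Icc 1 k,
        Polynomial.C ((j.factorial : ℂ)⁻¹ * (Acoef ρ P j k).eval 0) * (Polynomial.X ^ j - 1) :=
  stmt9_general ρ P hF hB
end

section
/- Under the assumptions on F, the first-order coefficient of the power expansion in q is P^(1)(z,y) = ρ(y−z) + ρ(z−1)·(1+ρ(z−1))/(1−ρ). -/
open scoped BigOperators

/-!
Compare the coefficients of `q⁰` and `q¹` in the functional equation. Since `u = z + O(q)`, at
order `q⁰` every substitution is `y := z`, and as `P⁰` does not depend on `y` the equation reads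
`z P⁰ = (1 - ρ + ρz)((z - 1) P⁰(0) + P⁰)`; cancelling `(1 - ρ)(z - 1)` and using
`P⁰(0) = 1 - ρ` gives `P⁰ = 1 + ρ(z - 1)`. At order `q¹` the only dependence on `y` comes from
the coefficient `ρ(y - z)` of `q` in `1 - ρ + ρu`, multiplied by `(z - 1) P⁰(0) + P⁰ = z`.
Hence `z (P¹ - ρ(y - z))`, and with it `P¹ - ρ(y - z) =: s(z)`, depends on `z` only. The
boundary condition gives `s(0) = -ρ`, after which the order-one equation is
`(1 - ρ)(z - 1) s = ρ (z - 1)² (1 + ρ(z - 1))`.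
-/

open Polynomial

/-- `p(z, y) ↦ p(z, z)`. -/
noncomputable def diagHom : Bzy →+* ℂ[X] := eval₂RingHom (RingHom.id ℂ[X]) X

@[simp] lemma embZ_C (a : ℂ) : embZ (C a) = cB a := map_C _

@[simp] lemma embZ_X : embZ X = X := map_X _

lemma embZ_injective : Function.Injective embZ := map_injective _ C_injective

@[simp] lemma coeff_zero_embZ (p : ℂ[X]) : (embZ p).coeff 0 = C (p.coeff 0) := coeff_map _ 0

@[simp] lemma diagHom_embZ (p : ℂ[X]) : diagHom (embZ p) = p := by
  simp only [diagHom, embZ, coe_eval₂RingHom, coe_mapRingHom, eval₂_map, RingHom.id_comp]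
  exact eval₂_C_X

@[simp] lemma diagHom_C (a : ℂ[X]) : diagHom (C a) = a := eval₂_C _ _

@[simp] lemma diagHom_X : diagHom X = X := eval₂_X _ _

@[simp] lemma constHom_apply (a : ℂ) : constHom a = PowerSeries.C (cB a) := rfl

@[simp] lemma constantCoeff_useries : PowerSeries.constantCoeff useries = X := by
  simp [useries]

@[simp] lemma coeff_one_useries : PowerSeries.coeff 1 useries = yB - X := by
  simp [useries]

@[simp] lemma constantCoeff_substY (p : ℂ[X]) :
    PowerSeries.constantCoeff (substY p) = embZ p := by
  simp only [substY, coe_eval₂RingHom, hom_eval₂, constantCoeff_useries]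
  rfl

@[simp] lemma constantCoeff_substZY (p : Bzy) :
    PowerSeries.constantCoeff (substZY p) = embZ (diagHom p) := by
  have h : PowerSeries.constantCoeff.comp substY = embZ := RingHom.ext constantCoeff_substY
  simp only [substZY, diagHom, coe_eval₂RingHom, hom_eval₂, h, PowerSeries.constantCoeff_C,
    RingHom.comp_id, embZ_X]

@[simp] lemma substY_C (a : ℂ) : substY (C a) = constHom a := eval₂_C _ _

@[simp] lemma substZY_embZ (p : ℂ[X]) : substZY (embZ p) = PowerSeries.C (embZ p) := by
  have h : substY.comp C = PowerSeries.C.comp (C.comp C) := RingHom.ext substY_C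
  simp only [substZY, embZ, coe_eval₂RingHom, coe_mapRingHom, eval₂_map, h, ← hom_eval₂]
  rfl

lemma IndepY.exists_eq_embZ {P : ℕ → Bzy} (hI : IndepY P) : ∃ p, P 0 = embZ p := by
  refine ⟨(P 0).map (evalRingHom 0), ?_⟩
  ext n : 1
  obtain ⟨c, hc⟩ := hI n
  simp [embZ, hc]

lemma exists_eq_embZ_of_X_mul_eq_embZ {p : Bzy} {r : ℂ[X]} (h : X * p = embZ r) :
    ∃ s, p = embZ s := by
  have hr0 : r.coeff 0 = 0 := by
    simpa using (congrArg (coeff · 0) h).symm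
  obtain ⟨s, rfl⟩ := X_dvd_iff.2 hr0
  exact ⟨s, mul_left_cancel₀ X_ne_zero (by rw [h, map_mul, embZ_X])⟩

lemma one_sub_C_mul_X_sub_one_ne_zero {ρ : ℂ} (hρ : ρ ≠ 1) :
    (1 - C ρ) * (X - 1 : ℂ[X]) ≠ 0 := by
  rw [← C_1, ← C_sub]
  exact mul_ne_zero (C_ne_zero.2 (sub_ne_zero.2 hρ.symm)) (X_sub_C_ne_zero 1)

lemma eq_of_zeroth_order_eq {ρ : ℂ} (hρ : ρ ≠ 1) {p : ℂ[X]} (hp0 : p.coeff 0 = 1 - ρ)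
    (h : X * p = (1 + C ρ * (X - 1)) * ((X - 1) * C (p.coeff 0) + p)) :
    p = 1 + C ρ * (X - 1) := by
  refine mul_left_cancel₀ (one_sub_C_mul_X_sub_one_ne_zero hρ) ?_
  rw [hp0, C_sub, C_1] at h
  linear_combination h

lemma eq_of_first_order_eq {ρ : ℂ} (hρ : ρ ≠ 1) {s : ℂ[X]} (hs0 : s.coeff 0 = -ρ)
    (h : X * s = (1 + C ρ * (X - 1)) * ((X - 1) * (C ρ * X + C (s.coeff 0)) + s)) :
    s = C ρ * (X - 1) * (1 + C ρ * (X - 1)) * C (1 - ρ)⁻¹ := by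
  have hinv : (1 - C ρ) * C (1 - ρ)⁻¹ = 1 := by
    rw [← C_1, ← C_sub, ← C_mul, mul_inv_cancel₀ (sub_ne_zero.2 hρ.symm), C_1]
  refine mul_left_cancel₀ (one_sub_C_mul_X_sub_one_ne_zero hρ) ?_
  rw [hs0, C_neg] at h
  linear_combination h - C ρ * (1 + C ρ * (X - 1)) * (X - 1) ^ 2 * hinv

namespace FuncEq

variable {ρ : ℝ} {P : ℕ → Bzy}

theorem X_mul_P_zero (hF : FuncEq ρ P) :
    X * P 0 = embZ ((1 + C (ρ : ℂ) * (X - 1)) * ((X - 1) * (P 0).coeff 0 + diagHom (P 0))) := by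
  have h := congrArg PowerSeries.constantCoeff hF
  simp only [map_mul, map_add, PowerSeries.constantCoeff_C, PowerSeries.constantCoeff_mk,
    constHom_apply, constantCoeff_useries, zero_add, Finset.range_one, Finset.sum_singleton,
    tsub_self, PowerSeries.coeff_zero_eq_constantCoeff, constantCoeff_substY,
    constantCoeff_substZY] at h
  rw [h]
  simp only [cB, map_sub, map_one, map_mul, map_add, embZ_C, embZ_X]
  ring

theorem X_mul_P_one (hF : FuncEq ρ P) {p : ℂ[X]} (hp : P 0 = embZ p) :
    X * P 1 = embZ ((1 + C (ρ : ℂ) * (X - 1)) * ((X - 1) * (P 1).coeff 0 + diagHom (P 1))) +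
      cB ρ * (yB - X) * embZ ((X - 1) * C (p.coeff 0) + p) := by
  have h := congrArg (PowerSeries.coeff 1) hF
  simp only [PowerSeries.coeff_C_mul, PowerSeries.coeff_mk, PowerSeries.coeff_one_mul, map_add,
    map_mul, PowerSeries.coeff_succ_C, PowerSeries.constantCoeff_C, PowerSeries.constantCoeff_mk,
    constHom_apply, coeff_one_useries, constantCoeff_useries, zero_add, Finset.sum_range_succ,
    Finset.range_zero, Finset.sum_empty, tsub_self, tsub_zero, zero_tsub,
    PowerSeries.coeff_zero_eq_constantCoeff, constantCoeff_substY, constantCoeff_substZY, hp,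
    coeff_zero_embZ, diagHom_embZ, substY_C, substZY_embZ] at h
  rw [h]
  simp only [cB, map_sub, map_one, map_mul, map_add, embZ_C, embZ_X]
  ring

theorem P_zero_eq (hF : FuncEq ρ P) (hI : IndepY P) (hB : Boundary ρ P) (hρ : (ρ : ℂ) ≠ 1) :
    P 0 = embZ (1 + C (ρ : ℂ) * (X - 1)) := by
  obtain ⟨p, hp⟩ := hI.exists_eq_embZ
  have h := hF.X_mul_P_zero
  rw [hp, coeff_zero_embZ, diagHom_embZ, ← embZ_X, ← map_mul] at h
  have hp0 : p.coeff 0 = 1 - ρ := by simpa [hp] using hB.1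
  rw [hp, eq_of_zeroth_order_eq hρ hp0 (embZ_injective h)]

theorem P_one_eq (hF : FuncEq ρ P) (hI : IndepY P) (hB : Boundary ρ P) (hρ : (ρ : ℂ) ≠ 1) :
    P 1 = cB ρ * (yB - X) +
      embZ (C (ρ : ℂ) * (X - 1) * (1 + C (ρ : ℂ) * (X - 1)) * C (1 - (ρ : ℂ))⁻¹) := by
  have h := hF.X_mul_P_one (hF.P_zero_eq hI hB hρ)
  have hz :
      (X - 1) * C ((1 + C (ρ : ℂ) * (X - 1)).coeff 0) + (1 + C (ρ : ℂ) * (X - 1)) = X := by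
    simp only [coeff_add, coeff_one_zero, mul_coeff_zero, coeff_C_zero, coeff_sub, coeff_X_zero,
      zero_sub, mul_neg, mul_one, map_add, map_one, map_neg]
    ring
  rw [hz, embZ_X] at h
  obtain ⟨s, hs⟩ := exists_eq_embZ_of_X_mul_eq_embZ (p := P 1 - cB ρ * (yB - X))
    (by rw [mul_sub, h]; ring)
  rw [sub_eq_iff_eq_add'] at hs
  have hP10 : (P 1).coeff 0 = C (ρ : ℂ) * X + C (s.coeff 0) := by
    simp [hs, cB, yB, mul_sub]
  have hs0 : s.coeff 0 = -ρ := by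
    have := hB.2 1 le_rfl
    rw [hP10] at this
    simp only [eval_add, eval_mul, eval_C, eval_X, mul_one] at this
    linear_combination this
  rw [hs, eq_of_first_order_eq hρ hs0 ?_]
  have hdiag : diagHom (P 1) = s := by simp [hs, cB, yB]
  rw [hP10, hdiag, hs] at h
  apply embZ_injective
  rw [map_mul, embZ_X]
  linear_combination h

end FuncEq

theorem stmt11 (ρ : ℝ) (hρ : ρ ∈ Set.Ioo (0 : ℝ) 1) (P : ℕ → Bzy)
    (hF : FuncEq ρ P) (hI : IndepY P) (hB : Boundary ρ P) :
    P 1 = cB (ρ : ℂ) * (yB - Polynomial.X) +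
      cB (ρ : ℂ) * (Polynomial.X - 1) * (1 + cB (ρ : ℂ) * (Polynomial.X - 1)) *
        cB ((1 - (ρ : ℂ))⁻¹) := by
  rw [hF.P_one_eq hI hB (by exact_mod_cast hρ.2.ne)]
  simp [cB]
end
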